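/- arXiv:2106.13340 — 4 statements merged into one kernel-verified Lean document; each statement's English description precedes it below -/
import Mathlib

section
/- For any real c ≥ 1/2 and p ≥ 2, the function ζ(γ) = (1 + cγ²/(2(1+γ)))^p / (1+γ) on γ > 0 attains its minimum at the unique point γ_c(p) = 2/(√(c²p² − (2c−1)) + cp − 1), and this point satisfies 1/(cp) ≤ γ_c(p) ≤ 2/(cp). -/
/-!
Writing `q = 1 + cγ²/(2(1+γ))`, one computes
`ζ'(γ) = q^(p-1) · N(γ) / (2(1+γ)³)` with `N(γ) = c(p-1)γ² + 2(cp-1)γ - 2`.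
For `c > 0`, `p > 1` the quadratic `N` has a negative and a positive root, the latter being
`γ_c(p)`; so `ζ` strictly decreases on `(0, γ_c(p)]` and strictly increases on `[γ_c(p), ∞)`.
The two bounds on `γ_c(p)` come from `1 ≤ √(c²p² - (2c-1)) ≤ cp + 1`, where the left
inequality amounts to `cp² ≥ 2`.
-/

open Real Set

section MinOfAntiMono

variable {α β : Type*} [LinearOrder α] [Preorder β] {f : α → β} {a b x : α}

lemma eq_of_isMinOn_Ioi_of_strictAnti_strictMono (h₀ : StrictAntiOn f (Ioc a b))
    (h₁ : StrictMonoOn f (Ici b)) (hb : b ∈ Ioi a) (hx : x ∈ Ioi a)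
    (hmin : IsMinOn f (Ioi a) x) : x = b := by
  by_contra hne
  have hlt : f b < f x := by
    rcases lt_or_gt_of_ne hne with h | h
    · exact h₀ ⟨hx, h.le⟩ (right_mem_Ioc.2 hb) h
    · exact h₁ self_mem_Ici h.le h
  exact (hmin hb).not_gt hlt

end MinOfAntiMono

namespace ZetaMin

variable {c p x : ℝ}

noncomputable def q (c γ : ℝ) : ℝ := 1 + c * γ ^ 2 / (2 * (1 + γ))

noncomputable def ζ (c p γ : ℝ) : ℝ := q c γ ^ p / (1 + γ)

def N (c p γ : ℝ) : ℝ := c * (p - 1) * γ ^ 2 + 2 * (c * p - 1) * γ - 2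

noncomputable def γc (c p : ℝ) : ℝ := 2 / (√(c ^ 2 * p ^ 2 - (2 * c - 1)) + c * p - 1)

lemma q_pos (hc : 0 ≤ c) (hx : -1 < x) : 0 < q c x := by
  have : 0 < 1 + x := by linarith
  unfold q
  positivity

lemma hasDerivAt_q (hx : x ≠ -1) :
    HasDerivAt (q c) (c * x * (x + 2) / (2 * (1 + x) ^ 2)) x := by
  have hx' : 2 * (1 + x) ≠ 0 := by
    intro h; apply hx; linarith
  have hnum : HasDerivAt (fun γ : ℝ => c * γ ^ 2) (c * (2 * x)) x := by
    simpa using (hasDerivAt_pow 2 x).const_mul c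
  have hden : HasDerivAt (fun γ : ℝ => 2 * (1 + γ)) 2 x := by
    simpa using ((hasDerivAt_id x).const_add 1).const_mul 2
  refine ((hnum.div hden hx').const_add 1).congr_deriv ?_
  field_simp
  ring

lemma hasDerivAt_ζ (hc : 0 ≤ c) (hp : 1 ≤ p) (hx : -1 < x) :
    HasDerivAt (ζ c p) (q c x ^ (p - 1) * N c p x / (2 * (1 + x) ^ 3)) x := by
  have h1x : 1 + x ≠ 0 := by linarith
  have hq := q_pos hc hx
  have hden : HasDerivAt (fun γ : ℝ => 1 + γ) 1 x := by
    simpa using (hasDerivAt_id x).const_add 1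
  refine (((hasDerivAt_q hx.ne').rpow_const (Or.inr hp)).div hden h1x).congr_deriv ?_
  rw [show q c x ^ p = q c x ^ (p - 1) * q c x by
    rw [← rpow_add_one hq.ne']; ring_nf]
  unfold q N
  field_simp
  ring

lemma continuousOn_ζ (hc : 0 ≤ c) (hp : 1 ≤ p) : ContinuousOn (ζ c p) (Ioi 0) :=
  fun _ hx => (hasDerivAt_ζ hc hp (by linarith [mem_Ioi.1 hx])).continuousAt.continuousWithinAt

lemma γc_denom_pos (hc : 0 < c) (hp : 1 < p) :
    0 < √(c ^ 2 * p ^ 2 - (2 * c - 1)) + c * p - 1 := by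
  have hD : (c * p - 1) ^ 2 < c ^ 2 * p ^ 2 - (2 * c - 1) := by nlinarith
  have : |c * p - 1| < √(c ^ 2 * p ^ 2 - (2 * c - 1)) := by
    rw [← sqrt_sq_eq_abs]; exact sqrt_lt_sqrt (sq_nonneg _) hD
  linarith [neg_abs_le (c * p - 1)]

lemma γc_pos (hc : 0 < c) (hp : 1 < p) : 0 < γc c p :=
  div_pos two_pos (γc_denom_pos hc hp)

lemma N_γc (hc : 0 < c) (hp : 1 < p) : N c p (γc c p) = 0 := by
  have hs := (γc_denom_pos hc hp).ne'
  have hr : √(c ^ 2 * p ^ 2 - (2 * c - 1)) ^ 2 = c ^ 2 * p ^ 2 - (2 * c - 1) :=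
    sq_sqrt (by nlinarith [sq_nonneg (c * p - 1), mul_pos hc (sub_pos.2 hp)])
  unfold N γc
  generalize √(c ^ 2 * p ^ 2 - (2 * c - 1)) = r at hs hr ⊢
  field_simp
  linear_combination (-2) * hr

lemma N_eq_mul (hc : 0 < c) (hp : 1 < p) (x : ℝ) :
    N c p x = (x - γc c p) * (c * (p - 1) * x + 2 / γc c p) := by
  have h0 := N_γc hc hp
  have hγ := (γc_pos hc hp).ne'
  unfold N at h0 ⊢
  field_simp
  linear_combination x * h0

lemma N_neg (hc : 0 < c) (hp : 1 < p) (hx : 0 ≤ x) (hxγ : x < γc c p) : N c p x < 0 := by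
  rw [N_eq_mul hc hp]
  have := γc_pos hc hp
  exact mul_neg_of_neg_of_pos (by linarith) (by positivity)

lemma N_pos (hc : 0 < c) (hp : 1 < p) (hxγ : γc c p < x) : 0 < N c p x := by
  rw [N_eq_mul hc hp]
  have := γc_pos hc hp
  have : 0 < x := by linarith
  exact mul_pos (by linarith) (by positivity)

lemma deriv_ζ_neg (hc : 0 < c) (hp : 1 < p) (hx : 0 < x) (hxγ : x < γc c p) :
    deriv (ζ c p) x < 0 := by
  rw [(hasDerivAt_ζ hc.le hp.le (by linarith)).deriv]
  have := q_pos hc.le (by linarith : -1 < x)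
  exact div_neg_of_neg_of_pos (mul_neg_of_pos_of_neg (by positivity) (N_neg hc hp hx.le hxγ))
    (by positivity)

lemma deriv_ζ_pos (hc : 0 < c) (hp : 1 < p) (hxγ : γc c p < x) : 0 < deriv (ζ c p) x := by
  have hx : 0 < x := (γc_pos hc hp).trans hxγ
  rw [(hasDerivAt_ζ hc.le hp.le (by linarith)).deriv]
  have := q_pos hc.le (by linarith : -1 < x)
  have := N_pos hc hp hxγ
  positivity

lemma strictAntiOn_ζ (hc : 0 < c) (hp : 1 < p) : StrictAntiOn (ζ c p) (Ioc 0 (γc c p)) := by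
  refine strictAntiOn_of_deriv_neg (convex_Ioc _ _)
    ((continuousOn_ζ hc.le hp.le).mono Ioc_subset_Ioi_self) fun x hx => ?_
  rw [interior_Ioc] at hx
  exact deriv_ζ_neg hc hp hx.1 hx.2

lemma strictMonoOn_ζ (hc : 0 < c) (hp : 1 < p) : StrictMonoOn (ζ c p) (Ici (γc c p)) := by
  refine strictMonoOn_of_deriv_pos (convex_Ici _)
    ((continuousOn_ζ hc.le hp.le).mono (Ici_subset_Ioi.2 (γc_pos hc hp))) fun x hx => ?_
  rw [interior_Ici] at hx
  exact deriv_ζ_pos hc hp hx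

lemma one_div_le_γc (hc : 0 < c) (hp : 1 < p) : 1 / (c * p) ≤ γc c p := by
  have hr : √(c ^ 2 * p ^ 2 - (2 * c - 1)) ≤ c * p + 1 := by
    rw [sqrt_le_left (by positivity)]
    nlinarith
  rw [γc, div_le_div_iff₀ (by positivity) (γc_denom_pos hc hp)]
  linarith

lemma γc_le_two_div (hc : 0 < c) (hp : 1 < p) (hcp : 2 ≤ c * p ^ 2) :
    γc c p ≤ 2 / (c * p) := by
  have hr : 1 ≤ √(c ^ 2 * p ^ 2 - (2 * c - 1)) := by
    rw [one_le_sqrt]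
    nlinarith
  rw [γc, div_le_div_iff₀ (γc_denom_pos hc hp) (by positivity)]
  linarith

end ZetaMin

theorem zeta_min_point (c p : ℝ) (hc : 1 / 2 ≤ c) (hp : 2 ≤ p) :
    let ζ : ℝ → ℝ := fun γ => (1 + c * γ ^ 2 / (2 * (1 + γ))) ^ p / (1 + γ)
    let γcp : ℝ := 2 / (Real.sqrt (c ^ 2 * p ^ 2 - (2 * c - 1)) + c * p - 1)
    γcp ∈ Set.Ioi (0 : ℝ) ∧
    IsMinOn ζ (Set.Ioi (0 : ℝ)) γcp ∧
    (∀ γ ∈ Set.Ioi (0 : ℝ), IsMinOn ζ (Set.Ioi (0 : ℝ)) γ → γ = γcp) ∧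
    1 / (c * p) ≤ γcp ∧ γcp ≤ 2 / (c * p) := by
  open ZetaMin in
  have hc₀ : 0 < c := by linarith
  have hp₁ : 1 < p := by linarith
  have hanti := strictAntiOn_ζ hc₀ hp₁
  have hmono := strictMonoOn_ζ hc₀ hp₁
  exact ⟨γc_pos hc₀ hp₁, isMinOn_Ioi_of_anti_mono hanti.antitoneOn hmono.monotoneOn,
    fun _ hγ hmin =>
      eq_of_isMinOn_Ioi_of_strictAnti_strictMono hanti hmono (γc_pos hc₀ hp₁) hγ hmin,
    one_div_le_γc hc₀ hp₁, γc_le_two_div hc₀ hp₁ (by nlinarith)⟩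
end

section
/- For any real c ≥ 1/2 and p ≥ 2, the minimum value of ζ_{p,c}(γ) = (1 + cγ²/(2(1+γ)))^p/(1+γ) over γ > 0 is at most e^{−1/(2cp)}. -/
/-!
Substitute `1 + γ = exp t`. Then `γ² / (2(1 + γ)) = 2 sinh² (t/2)`, so Bernoulli's inequality with
exponent `2c ≥ 1` gives `q_c(γ) ≤ cosh (t/2) ^ (4c) ≤ exp (c t² / 2)`, using
`cosh x ≤ exp (x² / 2)`. Hence `ζ_{p,c}(exp t - 1) ≤ exp (c p t² / 2 - t)`, and the choice
`t = 1 / (c p)` minimising the exponent gives `exp (-1 / (2 c p))`.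
-/

open Real Set

noncomputable def zeta (p c γ : ℝ) : ℝ :=
  (1 + c * γ ^ 2 / (2 * (1 + γ))) ^ p / (1 + γ)

lemma zeta_nonneg (p : ℝ) {c γ : ℝ} (hc : 0 ≤ c) (hγ : -1 < γ) : 0 ≤ zeta p c γ := by
  have hγ' : 0 < 1 + γ := by linarith
  unfold zeta
  positivity

lemma exp_sub_one_sq_div_exp (t : ℝ) :
    (exp t - 1) ^ 2 / (2 * exp t) = 2 * sinh (t / 2) ^ 2 := by
  have hexp : exp t = exp (t / 2) ^ 2 := by rw [← exp_nat_mul]; ring_nf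
  rw [sinh_eq, exp_neg, hexp]
  field_simp

lemma one_add_two_mul_sinh_sq_le {c : ℝ} (hc : 1 / 2 ≤ c) (x : ℝ) :
    1 + 2 * c * sinh x ^ 2 ≤ exp (2 * c * x ^ 2) :=
  calc 1 + 2 * c * sinh x ^ 2
      ≤ (1 + sinh x ^ 2) ^ (2 * c) :=
        one_add_mul_self_le_rpow_one_add (by nlinarith [sq_nonneg (sinh x)]) (by linarith)
    _ = (cosh x ^ 2) ^ (2 * c) := by rw [cosh_sq']
    _ ≤ (exp (x ^ 2 / 2) ^ 2) ^ (2 * c) := by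
        gcongr
        exact cosh_le_exp_half_sq x
    _ = exp (2 * c * x ^ 2) := by rw [← exp_nat_mul, ← exp_mul]; ring_nf

lemma zeta_exp_sub_one_le {p c : ℝ} (hp : 0 ≤ p) (hc : 1 / 2 ≤ c) (t : ℝ) :
    zeta p c (exp t - 1) ≤ exp (c * p * t ^ 2 / 2 - t) := by
  have hq : 1 + c * (exp t - 1) ^ 2 / (2 * exp t) = 1 + 2 * c * sinh (t / 2) ^ 2 := by
    rw [mul_div_assoc, exp_sub_one_sq_div_exp]
    ring
  have hq_nonneg : 0 ≤ 1 + 2 * c * sinh (t / 2) ^ 2 := by nlinarith [sq_nonneg (sinh (t / 2))]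
  calc zeta p c (exp t - 1)
      = (1 + 2 * c * sinh (t / 2) ^ 2) ^ p / exp t := by
        rw [zeta, add_sub_cancel, hq]
    _ ≤ exp (2 * c * (t / 2) ^ 2) ^ p / exp t := by
        gcongr
        exact one_add_two_mul_sinh_sq_le hc _
    _ = exp (c * p * t ^ 2 / 2 - t) := by
        rw [← exp_mul, ← exp_sub]
        ring_nf

theorem zeta_min_value (c p : ℝ) (hc : 1 / 2 ≤ c) (hp : 2 ≤ p) :
    sInf ((fun γ : ℝ => (1 + c * γ ^ 2 / (2 * (1 + γ))) ^ p / (1 + γ)) '' Set.Ioi (0 : ℝ))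
      ≤ Real.exp (-1 / (2 * c * p)) := by
  change sInf (zeta p c '' Ioi 0) ≤ _
  have hcp : 0 < c * p := by positivity
  set t := 1 / (c * p) with ht
  have hγ : 0 < exp t - 1 := by simpa using one_lt_exp_iff.mpr (by positivity : 0 < t)
  have hbdd : BddBelow (zeta p c '' Ioi 0) := by
    refine ⟨0, ?_⟩
    rintro _ ⟨γ, hγ, rfl⟩
    exact zeta_nonneg p (by linarith) (by linarith [mem_Ioi.mp hγ])
  have hexponent : c * p * t ^ 2 / 2 - t = -1 / (2 * c * p) := by
    rw [ht]
    field_simp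
    ring
  calc sInf (zeta p c '' Ioi 0)
      ≤ zeta p c (exp t - 1) := csInf_le hbdd (mem_image_of_mem _ hγ)
    _ ≤ exp (c * p * t ^ 2 / 2 - t) := zeta_exp_sub_one_le (by linarith) hc t
    _ = exp (-1 / (2 * c * p)) := by rw [hexponent]
end

section
/- For any fixed c > 0 and p ≥ 2, the function ζ(γ) = (1 + cγ²/(2(1+γ)))^p/(1+γ) is convex on (0, ∞). -/
open Set

/-!
The map `(u, v) ↦ u ^ 2 / v` is jointly convex on `v > 0` and increasing in `u ≥ 0`, so `f ^ 2 / g`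
is convex whenever `f ≥ 0` is convex and `g > 0` is concave. Applied once with `f = γ`,
`g = 2 (1 + γ)`, it shows that `b γ = 1 + c γ ^ 2 / (2 (1 + γ))` is convex; applied again with
`f = b ^ (p / 2)`, which is convex because `p / 2 ≥ 1`, and `g = 1 + γ`, it gives the convexity
of `b ^ p / (1 + γ)`.
-/

lemma sq_add_div_add_le {a b F G P Q : ℝ} (ha : 0 ≤ a) (hb : 0 ≤ b) (hP : 0 < P) (hQ : 0 < Q) :
    (a * F + b * G) ^ 2 / (a * P + b * Q) ≤ a * (F ^ 2 / P) + b * (G ^ 2 / Q) := by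
  rcases (add_nonneg (mul_nonneg ha hP.le) (mul_nonneg hb hQ.le)).eq_or_lt with hR | hR
  · rw [← hR, div_zero]
    positivity
  rw [div_le_iff₀ hR, mul_div_assoc', mul_div_assoc', div_add_div _ _ hP.ne' hQ.ne',
    div_mul_eq_mul_div, le_div_iff₀ (mul_pos hP hQ)]
  nlinarith [mul_nonneg (mul_nonneg ha hb) (sq_nonneg (F * Q - G * P))]

section

variable {E : Type*} [AddCommGroup E] [Module ℝ E] {s : Set E} {f g : E → ℝ}

theorem ConvexOn.rpow (hf : ConvexOn ℝ s f) (hf₀ : ∀ x ∈ s, 0 ≤ f x) {p : ℝ} (hp : 1 ≤ p) :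
    ConvexOn ℝ s fun x => f x ^ p :=
  ⟨hf.1, fun x hx y hy a b ha hb hab =>
    (Real.rpow_le_rpow (hf₀ _ (hf.1 hx hy ha hb hab)) (hf.2 hx hy ha hb hab) (by linarith)).trans
      ((convexOn_rpow hp).2 (hf₀ x hx) (hf₀ y hy) ha hb hab)⟩

theorem ConvexOn.sq_div (hf : ConvexOn ℝ s f) (hf₀ : ∀ x ∈ s, 0 ≤ f x) (hg : ConcaveOn ℝ s g)
    (hg₀ : ∀ x ∈ s, 0 < g x) : ConvexOn ℝ s fun x => f x ^ 2 / g x := by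
  refine ⟨hf.1, fun x hx y hy a b ha hb hab => ?_⟩
  have hz := hf.1 hx hy ha hb hab
  have hfz : f (a • x + b • y) ≤ a * f x + b * f y := hf.2 hx hy ha hb hab
  have hgz : a * g x + b * g y ≤ g (a • x + b • y) := hg.2 hx hy ha hb hab
  have hpos : 0 < a * g x + b * g y := by
    rcases ha.eq_or_lt with rfl | ha'
    · obtain rfl : b = 1 := by simpa using hab
      simpa using hg₀ y hy
    · exact add_pos_of_pos_of_nonneg (mul_pos ha' (hg₀ x hx)) (mul_nonneg hb (hg₀ y hy).le)
  calc f (a • x + b • y) ^ 2 / g (a • x + b • y)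
      ≤ (a * f x + b * f y) ^ 2 / (a * g x + b * g y) :=
        div_le_div₀ (sq_nonneg _) (pow_le_pow_left₀ (hf₀ _ hz) hfz 2) hpos hgz
    _ ≤ a * (f x ^ 2 / g x) + b * (f y ^ 2 / g y) :=
        sq_add_div_add_le ha hb (hg₀ x hx) (hg₀ y hy)

end

lemma concaveOn_one_add {s : Set ℝ} (hs : Convex ℝ s) : ConcaveOn ℝ s fun x => 1 + x :=
  ((concaveOn_id hs).add_const 1).congr fun x _ => add_comm x 1

lemma convexOn_one_add_mul_sq_div {c : ℝ} (hc : 0 ≤ c) :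
    ConvexOn ℝ (Ioi 0) fun γ : ℝ => 1 + c * γ ^ 2 / (2 * (1 + γ)) := by
  have hden : ConcaveOn ℝ (Ioi 0) fun γ : ℝ => 2 * (1 + γ) :=
    (concaveOn_one_add (convex_Ioi 0)).smul zero_le_two
  refine ((((convexOn_id (convex_Ioi (0 : ℝ))).sq_div (fun _ hx => le_of_lt hx) hden
    fun γ (hγ : 0 < γ) => by positivity).smul hc).add_const 1).congr fun γ _ => ?_
  simp only [Pi.add_apply, smul_eq_mul, id]
  ring

theorem zeta_convex (c p : ℝ) (hc : 0 < c) (hp : 2 ≤ p) :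
    ConvexOn ℝ (Set.Ioi (0 : ℝ))
      (fun γ : ℝ => (1 + c * γ ^ 2 / (2 * (1 + γ))) ^ p / (1 + γ)) := by
  have hb₀ : ∀ γ ∈ Ioi (0 : ℝ), 0 ≤ 1 + c * γ ^ 2 / (2 * (1 + γ)) := fun γ (hγ : 0 < γ) => by
    positivity
  have hb_half : ConvexOn ℝ (Ioi 0) fun γ : ℝ => (1 + c * γ ^ 2 / (2 * (1 + γ))) ^ (p / 2) :=
    (convexOn_one_add_mul_sq_div hc.le).rpow hb₀ (by linarith)
  refine (hb_half.sq_div (fun γ hγ => Real.rpow_nonneg (hb₀ γ hγ) _)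
    (concaveOn_one_add (convex_Ioi 0)) fun γ (hγ : 0 < γ) => by positivity).congr fun γ hγ => ?_
  dsimp only
  rw [← Real.rpow_mul_natCast (hb₀ γ hγ)]
  norm_num
end

section
/- Let H be a symmetric positive definite operator on ℝⁿ, s, a ∈ ℝⁿ, β ∈ ℝ, and suppose there exists x with ⟨H⁻¹x, x⟩ < 1 and ⟨a, x⟩ ≤ β. Then the problem min_{τ ≥ 0} [‖s − τa‖* + τβ], where ‖v‖* = ⟨v, Hv⟩^{1/2}, has a solution: τ* = 0 if ⟨a, Hs⟩ ≤ β‖s‖*, and otherwise τ* is the unconstrained minimizer of τ ↦ ‖s − τa‖* + τβ. Moreover, this solution is unique if β < ‖a‖*. -/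
/-!
Write `‖v‖ = √(vᵀHv)` for the norm of the inner product `⟪u, v⟫ = uᵀHv`, so that the objective is
`φ τ = ‖s - τ • a‖ + τ β`. The Slater point `x` gives `y = H⁻¹x` with `‖y‖ < 1` and
`⟪a, y⟫ = aᵀx ≤ β`, hence `-‖a‖ < β`, or `0 ≤ β` when `‖a‖ = 0`.

Cauchy–Schwarz gives `‖s‖² - τ⟪a, s⟫ = ⟪s - τa, s⟫ ≤ ‖s - τa‖ ‖s‖`, so `φ τ ≥ ‖s‖ = φ 0` whenever
`τ⟪a, s⟫ ≤ τβ‖s‖`. If `⟪a, s⟫ ≤ β‖s‖` this makes `0` optimal on `τ ≥ 0`. Otherwise it shows that no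
`τ < 0` beats `0`, and `β‖s‖ < ⟪a, s⟫ ≤ ‖a‖‖s‖` forces `|β| < ‖a‖`, so `φ τ ≥ |τ|(‖a‖ - |β|) - ‖s‖`
is coercive and `φ` has a global minimiser, which can be taken nonnegative.

If `|β| < ‖a‖` and `τ₁ ≠ τ₂` both minimise `φ`, then at their midpoint `m` we get
`‖s - τ₁a‖ + ‖s - τ₂a‖ ≤ 2‖s - ma‖`, and the parallelogram law turns this into
`(τ₂ - τ₁)²‖a‖² ≤ (τ₂ - τ₁)²β²`, a contradiction.
-/

open Set Filter
open scoped RealInnerProductSpace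

section AuxObjective

variable {E : Type*} [SeminormedAddCommGroup E] [InnerProductSpace ℝ E] {s a : E} {β τ : ℝ}

def auxObjective (s a : E) (β τ : ℝ) : ℝ := ‖s - τ • a‖ + τ * β

lemma auxObjective_zero : auxObjective s a β 0 = ‖s‖ := by simp [auxObjective]

lemma continuous_auxObjective : Continuous (auxObjective s a β) := by
  unfold auxObjective; fun_prop

lemma abs_mul_norm_sub_norm_add_mul_le_auxObjective :
    |τ| * ‖a‖ - ‖s‖ + τ * β ≤ auxObjective s a β τ := by
  have h := norm_sub_norm_le (τ • a) s
  rw [norm_smul, Real.norm_eq_abs, norm_sub_rev] at h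
  unfold auxObjective
  linarith

lemma norm_le_auxObjective (hs : 0 < ‖s‖) (hτ : τ * ⟪a, s⟫ ≤ τ * (β * ‖s‖)) :
    ‖s‖ ≤ auxObjective s a β τ := by
  have key : ‖s‖ * (‖s‖ - τ * β) ≤ ‖s‖ * ‖s - τ • a‖ := calc
    ‖s‖ * (‖s‖ - τ * β) ≤ ‖s‖ ^ 2 - τ * ⟪a, s⟫ := by linarith
    _ = ⟪s - τ • a, s⟫ := by
      rw [inner_sub_left, real_inner_smul_left, real_inner_self_eq_norm_sq]
    _ ≤ ‖s - τ • a‖ * ‖s‖ := real_inner_le_norm _ _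
    _ = ‖s‖ * ‖s - τ • a‖ := mul_comm _ _
  have := le_of_mul_le_mul_left key hs
  unfold auxObjective
  linarith

lemma neg_norm_lt_or_nonneg_of_inner_le {y : E} (hy : ‖y‖ < 1) (hay : ⟪a, y⟫ ≤ β) :
    -‖a‖ < β ∨ 0 ≤ β := by
  have hCS := neg_le_of_abs_le (abs_real_inner_le_norm a y)
  rcases (norm_nonneg a).eq_or_lt with ha | ha
  · right
    rw [← ha, zero_mul, neg_zero] at hCS
    linarith
  · left
    nlinarith [mul_lt_mul_of_pos_left hy ha]

lemma isMinOn_auxObjective_zero (hβ : -‖a‖ ≤ β) (h : ⟪a, s⟫ ≤ β * ‖s‖) :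
    IsMinOn (auxObjective s a β) (Ici 0) 0 := by
  intro τ (hτ : 0 ≤ τ)
  rw [mem_ofPred_eq, auxObjective_zero]
  rcases (norm_nonneg s).eq_or_lt with hs | hs
  · have := abs_mul_norm_sub_norm_add_mul_le_auxObjective (s := s) (a := a) (β := β) (τ := τ)
    rw [abs_of_nonneg hτ, ← hs] at this
    rw [← hs]
    nlinarith
  · exact norm_le_auxObjective hs (mul_le_mul_of_nonneg_left h hτ)

lemma tendsto_auxObjective_cocompact (hβ : |β| < ‖a‖) :
    Tendsto (auxObjective s a β) (cocompact ℝ) atTop := by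
  have hlim : Tendsto (fun τ : ℝ => |τ| * (‖a‖ - |β|) - ‖s‖) (cocompact ℝ) atTop := by
    simp_rw [sub_eq_add_neg _ ‖s‖, ← Real.norm_eq_abs]
    exact tendsto_atTop_add_const_right _ _
      (tendsto_norm_cocompact_atTop.atTop_mul_const (sub_pos.2 hβ))
  refine tendsto_atTop_mono (fun τ => ?_) hlim
  have h1 := abs_mul_norm_sub_norm_add_mul_le_auxObjective (s := s) (a := a) (β := β) (τ := τ)
  have h2 := neg_abs_le (τ * β)
  rw [abs_mul] at h2
  linarith

lemma exists_nonneg_isMinOn_univ_auxObjective (hβ : -‖a‖ < β ∨ 0 ≤ β)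
    (h : β * ‖s‖ < ⟪a, s⟫) : ∃ τ, 0 ≤ τ ∧ IsMinOn (auxObjective s a β) univ τ := by
  have hCS : ⟪a, s⟫ ≤ ‖a‖ * ‖s‖ := real_inner_le_norm a s
  have hs : 0 < ‖s‖ := (norm_nonneg s).lt_of_ne fun hs => by
    rw [← hs] at h hCS
    linarith
  have hβa : |β| < ‖a‖ := by
    have := lt_of_mul_lt_mul_right (h.trans_le hCS) hs.le
    exact abs_lt.mpr ⟨by rcases hβ with hβ | hβ <;> linarith, this⟩
  obtain ⟨m, hm⟩ := continuous_auxObjective.exists_forall_le (tendsto_auxObjective_cocompact hβa)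
  rcases le_or_gt 0 m with hm0 | hm0
  · exact ⟨m, hm0, fun τ _ => hm τ⟩
  · refine ⟨0, le_rfl, fun τ _ => le_trans ?_ (hm τ)⟩
    rw [auxObjective_zero]
    exact norm_le_auxObjective hs (mul_le_mul_of_nonpos_left h.le hm0.le)

lemma eq_of_auxObjective_le_midpoint {τ₁ τ₂ : ℝ} (hβ : |β| < ‖a‖)
    (heq : auxObjective s a β τ₁ = auxObjective s a β τ₂)
    (hmid : auxObjective s a β τ₁ ≤ auxObjective s a β (midpoint ℝ τ₁ τ₂)) : τ₁ = τ₂ := by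
  set m := midpoint ℝ τ₁ τ₂ with hm
  have hpar : (2 * ‖s - m • a‖) ^ 2 + ((τ₂ - τ₁) * ‖a‖) ^ 2 =
      2 * ‖s - τ₁ • a‖ ^ 2 + 2 * ‖s - τ₂ • a‖ ^ 2 := by
    have h := parallelogram_law_with_norm ℝ (s - τ₁ • a) (s - τ₂ • a)
    have e₁ : s - τ₁ • a + (s - τ₂ • a) = (2 : ℝ) • (s - m • a) := by
      rw [hm, midpoint_eq_smul_add, smul_sub, smul_smul, smul_eq_mul, ← mul_assoc, mul_invOf_self,
        one_mul, two_smul, add_smul]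
      abel
    have e₂ : s - τ₁ • a - (s - τ₂ • a) = (τ₂ - τ₁) • a := by rw [sub_smul]; abel
    rw [e₁, e₂, norm_smul, norm_smul, Real.norm_two, Real.norm_eq_abs, mul_pow (|_|), sq_abs,
      ← mul_pow] at h
    linarith
  have hmτ : m = (τ₁ + τ₂) / 2 := by rw [hm, midpoint_eq_smul_add, smul_eq_mul, invOf_eq_inv]; ring
  unfold auxObjective at heq hmid
  rw [hmτ] at hmid hpar
  have hβ2 : β ^ 2 < ‖a‖ ^ 2 := sq_lt_sq' (neg_lt_of_abs_lt hβ) (lt_of_abs_lt hβ)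
  have hd : (τ₂ - τ₁) ^ 2 * (‖a‖ ^ 2 - β ^ 2) ≤ 0 := by
    nlinarith [norm_nonneg (s - τ₁ • a), norm_nonneg (s - τ₂ • a)]
  by_contra hne
  have := mul_pos (sq_pos_of_ne_zero (sub_ne_zero.2 (Ne.symm hne))) (sub_pos.2 hβ2)
  linarith

lemma eq_of_isMinOn_auxObjective {S : Set ℝ} (hS : Convex ℝ S) (hβ : |β| < ‖a‖) {τ₁ τ₂ : ℝ}
    (h₁ : τ₁ ∈ S) (h₂ : τ₂ ∈ S) (hm₁ : IsMinOn (auxObjective s a β) S τ₁)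
    (hm₂ : IsMinOn (auxObjective s a β) S τ₂) : τ₁ = τ₂ :=
  eq_of_auxObjective_le_midpoint hβ (le_antisymm (hm₁ h₂) (hm₂ h₁)) (hm₁ (hS.midpoint_mem h₁ h₂))

theorem exists_isMinOn_auxObjective (hβ : -‖a‖ < β ∨ 0 ≤ β) :
    ∃ τ ∈ Ici (0 : ℝ), IsMinOn (auxObjective s a β) (Ici 0) τ ∧
      (⟪a, s⟫ ≤ β * ‖s‖ → τ = 0) ∧
      (¬ ⟪a, s⟫ ≤ β * ‖s‖ → IsMinOn (auxObjective s a β) univ τ) ∧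
      (β < ‖a‖ → ∀ τ' ∈ Ici (0 : ℝ), IsMinOn (auxObjective s a β) (Ici 0) τ' → τ' = τ) := by
  have huniq : ∀ τ ∈ Ici (0 : ℝ), IsMinOn (auxObjective s a β) (Ici 0) τ → β < ‖a‖ →
      ∀ τ' ∈ Ici (0 : ℝ), IsMinOn (auxObjective s a β) (Ici 0) τ' → τ' = τ :=
    fun τ hτ hmin hβa τ' hτ' hmin' =>
      eq_of_isMinOn_auxObjective (convex_Ici 0)
        (abs_lt.mpr ⟨by rcases hβ with hβ | hβ <;> linarith, hβa⟩) hτ' hτ hmin' hmin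
  by_cases h : ⟪a, s⟫ ≤ β * ‖s‖
  · have hβ' : -‖a‖ ≤ β := by rcases hβ with hβ | hβ <;> linarith [norm_nonneg a]
    have hmin := isMinOn_auxObjective_zero hβ' h
    exact ⟨0, self_mem_Ici, hmin, fun _ => rfl, (absurd h ·), huniq 0 self_mem_Ici hmin⟩
  · obtain ⟨τ, hτ, hmin⟩ := exists_nonneg_isMinOn_univ_auxObjective hβ (not_le.1 h)
    have hmin' := hmin.on_subset (subset_univ (Ici 0))
    exact ⟨τ, hτ, hmin', (absurd · h), fun _ => hmin, huniq τ hτ hmin'⟩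

end AuxObjective

open Matrix

theorem aux_prob_solution (n : ℕ) (H : Matrix (Fin n) (Fin n) ℝ) (hH : H.PosDef)
    (s a : Fin n → ℝ) (β : ℝ)
    (hSlater : ∃ x : Fin n → ℝ, x ⬝ᵥ H⁻¹ *ᵥ x < 1 ∧ a ⬝ᵥ x ≤ β) :
    let φ : ℝ → ℝ := fun τ =>
      Real.sqrt ((s - τ • a) ⬝ᵥ H *ᵥ (s - τ • a)) + τ * β
    ∃ τstar : ℝ, τstar ∈ Set.Ici (0 : ℝ) ∧ IsMinOn φ (Set.Ici (0 : ℝ)) τstar ∧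
      (a ⬝ᵥ H *ᵥ s ≤ β * Real.sqrt (s ⬝ᵥ H *ᵥ s) → τstar = 0) ∧
      (¬ (a ⬝ᵥ H *ᵥ s ≤ β * Real.sqrt (s ⬝ᵥ H *ᵥ s)) → IsMinOn φ Set.univ τstar) ∧
      (β < Real.sqrt (a ⬝ᵥ H *ᵥ a) →
        ∀ τ ∈ Set.Ici (0 : ℝ), IsMinOn φ (Set.Ici (0 : ℝ)) τ → τ = τstar) := by
  -- `‖v‖ = √(vᵀHv)` for these instances, but `‖v‖` written here would elaborate to the sup norm.
  let := H.toSeminormedAddCommGroup hH.posSemidef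
  let := H.toInnerProductSpace hH.posSemidef
  have hinner (u v : Fin n → ℝ) : ⟪u, v⟫ = u ⬝ᵥ H *ᵥ v := dotProduct_comm _ _
  obtain ⟨x, hx, hax⟩ := hSlater
  have hHx : H *ᵥ H⁻¹ *ᵥ x = x := by
    rw [mulVec_mulVec, mul_nonsing_inv _ hH.det_pos.ne'.isUnit, one_mulVec]
  have hy : √⟪H⁻¹ *ᵥ x, H⁻¹ *ᵥ x⟫ < 1 := by
    rwa [hinner, hHx, dotProduct_comm, Real.sqrt_lt' one_pos, one_pow]
  have hsol := exists_isMinOn_auxObjective (s := s) (a := a) (β := β)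
    (neg_norm_lt_or_nonneg_of_inner_le (by rwa [norm_eq_sqrt_real_inner]) (by rwa [hinner, hHx]))
  unfold auxObjective at hsol
  simp only [norm_eq_sqrt_real_inner, hinner] at hsol
  exact hsol
end
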